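/- arXiv:2510.07911 — 6 statements merged into one kernel-verified Lean document; each statement's English description precedes it below -/
import Mathlib

section
/- There exists a unique t_max > 0 with ψ'(t_max) = 0; ψ is strictly increasing on (0, t_max] and strictly decreasing on [t_max, ∞); consequently ψ(t_max) = sup_{t>0} ψ(t), and ψ(t_max) > 0. -/
open Set Filter Topology

/-!
Write `ψ(t) = A t^r + B t^s - C t^w` with `w < r < 0` and `w < s < 0`. Then
`ψ'(t) = t^(w-1) g(t)` where `g(t) = A r t^(r-w) + B s t^(s-w) - C w` is strictly decreasing on
`[0, ∞)`, starts at `g(0) = -C w > 0` and tends to `-∞`; its unique zero is the unique critical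
point of `ψ`, where `ψ` switches from increasing to decreasing. At that point the relation
`g = 0` eliminates `C` and gives `-w ψ = t^w (A (r-w) t^(r-w) + B (s-w) t^(s-w)) > 0`.
-/

noncomputable def fiberingFun (A B C r s w t : ℝ) : ℝ :=
  A * t ^ r + B * t ^ s - C * t ^ w

noncomputable def fiberingDerivFactor (A B C r s w t : ℝ) : ℝ :=
  A * r * t ^ (r - w) + B * s * t ^ (s - w) - C * w

section Unimodal

variable {f f' : ℝ → ℝ} {a b : ℝ}

theorem strictMonoOn_Ioc_of_hasDerivAt_pos (hd : ∀ t ∈ Ioc a b, HasDerivAt f (f' t) t)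
    (hpos : ∀ t ∈ Ioo a b, 0 < f' t) : StrictMonoOn f (Ioc a b) :=
  strictMonoOn_of_hasDerivWithinAt_pos (convex_Ioc a b)
    (fun t ht ↦ (hd t ht).continuousAt.continuousWithinAt)
    (fun t ht ↦ (hd t (interior_subset ht)).hasDerivWithinAt)
    (by rwa [interior_Ioc])

theorem strictAntiOn_Ici_of_hasDerivAt_neg (hd : ∀ t ∈ Ici b, HasDerivAt f (f' t) t)
    (hneg : ∀ t ∈ Ioi b, f' t < 0) : StrictAntiOn f (Ici b) :=
  strictAntiOn_of_hasDerivWithinAt_neg (convex_Ici b)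
    (fun t ht ↦ (hd t ht).continuousAt.continuousWithinAt)
    (fun t ht ↦ (hd t (interior_subset ht)).hasDerivWithinAt)
    (by rwa [interior_Ici])

theorem isMaxOn_Ioi_of_monotoneOn_of_antitoneOn (hab : a < b) (hmono : MonotoneOn f (Ioc a b))
    (hanti : AntitoneOn f (Ici b)) : IsMaxOn f (Ioi a) b := by
  intro t (ht : a < t)
  rcases le_total t b with htb | hbt
  · exact hmono ⟨ht, htb⟩ ⟨hab, le_rfl⟩ htb
  · exact hanti self_mem_Ici hbt hbt

end Unimodal

section Fibering

variable {A B C r s w t : ℝ}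

theorem hasDerivAt_fiberingFun (ht : 0 < t) :
    HasDerivAt (fiberingFun A B C r s w) (t ^ (w - 1) * fiberingDerivFactor A B C r s w t) t := by
  have hpow (e : ℝ) : HasDerivAt (fun x : ℝ ↦ x ^ e) (e * t ^ (e - 1)) t :=
    Real.hasDerivAt_rpow_const (Or.inl ht.ne')
  have hsplit (e : ℝ) : t ^ (e - 1) = t ^ (w - 1) * t ^ (e - w) := by
    rw [← Real.rpow_add ht]; ring_nf
  refine ((((hpow r).const_mul A).add ((hpow s).const_mul B)).sub
    ((hpow w).const_mul C)).congr_deriv ?_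
  rw [fiberingDerivFactor, hsplit r, hsplit s]
  ring

theorem fiberingFun_eq_mul (ht : 0 < t) :
    fiberingFun A B C r s w t = t ^ w * (A * t ^ (r - w) + B * t ^ (s - w) - C) := by
  have hsplit (e : ℝ) : t ^ e = t ^ w * t ^ (e - w) := by
    rw [← Real.rpow_add ht]; ring_nf
  rw [fiberingFun, hsplit r, hsplit s]
  ring

theorem continuous_fiberingDerivFactor (hwr : w < r) (hws : w < s) :
    Continuous (fiberingDerivFactor A B C r s w) := by
  unfold fiberingDerivFactor
  fun_prop (disch := linarith)

theorem fiberingDerivFactor_zero (hwr : w < r) (hws : w < s) :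
    fiberingDerivFactor A B C r s w 0 = -(C * w) := by
  simp [fiberingDerivFactor, Real.zero_rpow (sub_pos.2 hwr).ne', Real.zero_rpow (sub_pos.2 hws).ne']

variable (hA : 0 < A) (hB : 0 < B) (hwr : w < r) (hws : w < s)
include hA hB hwr hws

theorem strictAntiOn_fiberingDerivFactor (hr : r < 0) (hs : s < 0) :
    StrictAntiOn (fiberingDerivFactor A B C r s w) (Ici 0) := by
  intro x (hx : 0 ≤ x) y _ hxy
  have h₁ : x ^ (r - w) < y ^ (r - w) := Real.rpow_lt_rpow hx hxy (sub_pos.2 hwr)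
  have h₂ : x ^ (s - w) < y ^ (s - w) := Real.rpow_lt_rpow hx hxy (sub_pos.2 hws)
  have hAr : A * r < 0 := mul_neg_of_pos_of_neg hA hr
  have hBs : B * s < 0 := mul_neg_of_pos_of_neg hB hs
  simp only [fiberingDerivFactor]
  nlinarith

theorem tendsto_fiberingDerivFactor_atTop (hr : r < 0) (hs : s < 0) :
    Tendsto (fiberingDerivFactor A B C r s w) atTop atBot := by
  have hr' := (tendsto_rpow_atTop (sub_pos.2 hwr)).const_mul_atTop_of_neg
    (mul_neg_of_pos_of_neg hA hr)
  have hs' := (tendsto_rpow_atTop (sub_pos.2 hws)).const_mul_atTop_of_neg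
    (mul_neg_of_pos_of_neg hB hs)
  exact tendsto_atBot_add_const_right _ _ (hr'.atBot_add_atBot hs')

theorem exists_pos_fiberingDerivFactor_eq_zero (hC : 0 < C) (hr : r < 0) (hs : s < 0) :
    ∃ t > 0, fiberingDerivFactor A B C r s w t = 0 := by
  have hg₀ : 0 < fiberingDerivFactor A B C r s w 0 := by
    rw [fiberingDerivFactor_zero hwr hws]
    nlinarith
  obtain ⟨b, hb, hb₀⟩ := ((tendsto_fiberingDerivFactor_atTop hA hB hwr hws hr hs).eventually
    (eventually_lt_atBot 0)).and (eventually_ge_atTop 0) |>.exists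
  obtain ⟨t, ht, hgt⟩ := intermediate_value_Icc' hb₀
    (continuous_fiberingDerivFactor hwr hws).continuousOn ⟨hb.le, hg₀.le⟩
  refine ⟨t, ht.1.lt_of_ne ?_, hgt⟩
  rintro rfl
  exact hg₀.ne' hgt

theorem fiberingFun_pos_of_fiberingDerivFactor_eq_zero (hr : r < 0) (ht : 0 < t)
    (hg : fiberingDerivFactor A B C r s w t = 0) : 0 < fiberingFun A B C r s w t := by
  rw [fiberingFun_eq_mul ht]
  refine mul_pos (Real.rpow_pos_of_pos ht w) ?_
  have hX := mul_pos hA (Real.rpow_pos_of_pos ht (r - w))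
  have hY := mul_pos hB (Real.rpow_pos_of_pos ht (s - w))
  -- `-w` times the bracket equals `A (r-w) t^(r-w) + B (s-w) t^(s-w)` once `C w` is eliminated
  rw [fiberingDerivFactor] at hg
  nlinarith [mul_pos hX (sub_pos.2 hwr), mul_pos hY (sub_pos.2 hws)]

theorem exists_unique_critical_isMaxOn_of_eqOn_fiberingFun {ψ : ℝ → ℝ}
    (hψ : EqOn ψ (fiberingFun A B C r s w) (Ioi 0)) (hC : 0 < C) (hr : r < 0) (hs : s < 0) :
    ∃ tmax > 0, deriv ψ tmax = 0 ∧ (∀ t, 0 < t → deriv ψ t = 0 → t = tmax) ∧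
      StrictMonoOn ψ (Ioc 0 tmax) ∧ StrictAntiOn ψ (Ici tmax) ∧
      (∀ t, 0 < t → ψ t ≤ ψ tmax) ∧ 0 < ψ tmax := by
  set g := fiberingDerivFactor A B C r s w
  have hd (t : ℝ) (ht : 0 < t) : HasDerivAt ψ (t ^ (w - 1) * g t) t :=
    (hasDerivAt_fiberingFun ht).congr_of_eventuallyEq (eventually_of_mem (Ioi_mem_nhds ht) hψ)
  have hg : StrictAntiOn g (Ici 0) := strictAntiOn_fiberingDerivFactor hA hB hwr hws hr hs
  obtain ⟨tmax, htmax, hroot⟩ : ∃ t > 0, g t = 0 :=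
    exists_pos_fiberingDerivFactor_eq_zero hA hB hwr hws hC hr hs
  have hmono : StrictMonoOn ψ (Ioc 0 tmax) :=
    strictMonoOn_Ioc_of_hasDerivAt_pos (fun t ht ↦ hd t ht.1) fun t ht ↦
      mul_pos (Real.rpow_pos_of_pos ht.1 _) (hroot ▸ hg ht.1.le htmax.le ht.2)
  have hanti : StrictAntiOn ψ (Ici tmax) :=
    strictAntiOn_Ici_of_hasDerivAt_neg (fun t ht ↦ hd t (htmax.trans_le ht)) fun t ht ↦
      mul_neg_of_pos_of_neg (Real.rpow_pos_of_pos (htmax.trans ht) _)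
        (hroot ▸ hg htmax.le (htmax.trans ht).le ht)
  refine ⟨tmax, htmax, by rw [(hd tmax htmax).deriv, hroot, mul_zero], fun t ht h ↦ ?_, hmono,
    hanti, fun t ht ↦ ?_, ?_⟩
  · rw [(hd t ht).deriv, mul_eq_zero, or_iff_right (Real.rpow_pos_of_pos ht _).ne'] at h
    exact hg.injOn ht.le htmax.le (h.trans hroot.symm)
  · exact isMaxOn_Ioi_of_monotoneOn_of_antitoneOn htmax hmono.monotoneOn hanti.antitoneOn ht
  · rw [hψ htmax]
    exact fiberingFun_pos_of_fiberingDerivFactor_eq_zero hA hB hwr hws hr htmax hroot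

end Fibering

theorem stmt_3_general (p q θ α A B C : ℝ)
    (hα0 : 0 < α) (hp : 1 < p) (hθ : 1 < θ) (hpq : p * θ < q)
    (hA : 0 < A) (hB : 0 < B) (hC : 0 < C)
    (ψ : ℝ → ℝ)
    (hψ : ∀ t, 0 < t →
      ψ t = A * t ^ (p - q) + B * t ^ (p * θ - q) - C * t ^ (1 - α - q)) :
    ∃ tmax > 0, deriv ψ tmax = 0 ∧ (∀ t, 0 < t → deriv ψ t = 0 → t = tmax) ∧
      StrictMonoOn ψ (Set.Ioc 0 tmax) ∧ StrictAntiOn ψ (Set.Ici tmax) ∧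
      (∀ t, 0 < t → ψ t ≤ ψ tmax) ∧ 0 < ψ tmax := by
  have hpθ : p < p * θ := by nlinarith
  exact exists_unique_critical_isMaxOn_of_eqOn_fiberingFun hA hB (by linarith) (by linarith) hψ hC
    (by linarith) (by linarith)

/-- There is a unique t_max > 0 with ψ'(t_max) = 0; ψ is strictly increasing on (0, t_max],
strictly decreasing on [t_max, ∞), ψ(t_max) is the (attained) supremum of ψ over (0,∞),
and ψ(t_max) > 0. -/
theorem stmt_3 (p q θ α A B C : ℝ)
    (hα0 : 0 < α) (hα1 : α < 1) (hp : 1 < p) (hθ : 1 < θ) (hpq : p * θ < q)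
    (hA : 0 < A) (hB : 0 < B) (hC : 0 < C)
    (ψ : ℝ → ℝ)
    (hψ : ∀ t, 0 < t →
      ψ t = A * t ^ (p - q) + B * t ^ (p * θ - q) - C * t ^ (1 - α - q)) :
    ∃ tmax > 0, deriv ψ tmax = 0 ∧ (∀ t, 0 < t → deriv ψ t = 0 → t = tmax) ∧
      StrictMonoOn ψ (Set.Ioc 0 tmax) ∧ StrictAntiOn ψ (Set.Ici tmax) ∧
      (∀ t, 0 < t → ψ t ≤ ψ tmax) ∧ 0 < ψ tmax :=
  stmt_3_general p q θ α A B C hα0 hp hθ hpq hA hB hC ψ hψ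
end

section
/- Let t_max > 0 be the unique critical point of ψ (its global maximizer). If D is a real number with 0 < q·D < ψ(t_max), then there exist t₁, t₂ with 0 < t₁ < t_max < t₂ such that ψ(t₁) = q·D = ψ(t₂), ψ'(t₁) > 0 and ψ'(t₂) < 0; moreover t₁ and t₂ are the only solutions of ψ(t) = q·D in (0,∞). -/
/-!
The derivative of `ψ` vanishes only at `tmax`, so by Darboux's theorem it has constant sign on
`(0, tmax)` and on `(tmax, ∞)`; since `tmax` is the maximum, the sign is positive on the left and
negative on the right. Hence `ψ` increases strictly up to `tmax` and decreases strictly after it.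
As `ψ → -∞` at `0⁺` (the term `-C t^(1-α-q)` dominates) and `ψ → 0` at `∞`, the level
`0 < qD < ψ(tmax)` is attained exactly once on each side, by the intermediate value theorem.
-/

open Set Filter Topology

theorem deriv_pos_or_deriv_neg_of_ne_zero {f : ℝ → ℝ} {s : Set ℝ} (hs : s.OrdConnected)
    (h0 : ∀ x ∈ s, deriv f x ≠ 0) : (∀ x ∈ s, 0 < deriv f x) ∨ ∀ x ∈ s, deriv f x < 0 := by
  by_contra! ⟨⟨x, hx, hx0⟩, y, hy, hy0⟩
  have hdiff : ∀ z ∈ s, DifferentiableAt ℝ f z := fun z hz =>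
    differentiableAt_of_deriv_ne_zero (h0 z hz)
  obtain ⟨z, hz, hz0⟩ := (hs.image_deriv hdiff).out (mem_image_of_mem _ hx)
    (mem_image_of_mem _ hy) ⟨hx0, hy0⟩
  exact h0 z hz hz0

section UniqueCriticalPoint

variable {f : ℝ → ℝ} {m : ℝ}

theorem deriv_pos_of_isMaxOn_of_unique_critical (hf : ContinuousOn f (Ioi 0))
    (hcrit : ∀ t ∈ Ioi 0, deriv f t = 0 → t = m) (hmax : IsMaxOn f (Ioi 0) m) :
    ∀ t ∈ Ioo 0 m, 0 < deriv f t := by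
  intro t ht
  rcases deriv_pos_or_deriv_neg_of_ne_zero ordConnected_Ioo
    fun x hx h => hx.2.ne (hcrit x hx.1 h) with hpos | hneg
  · exact hpos t ht
  have hanti : StrictAntiOn f (Ioc 0 m) :=
    strictAntiOn_of_deriv_neg (convex_Ioc 0 m) (hf.mono Ioc_subset_Ioi_self)
      (by rwa [interior_Ioc])
  exact absurd (hmax ht.1) (hanti ⟨ht.1, ht.2.le⟩ ⟨ht.1.trans ht.2, le_rfl⟩ ht.2).not_ge

theorem deriv_neg_of_isMaxOn_of_unique_critical (hf : ContinuousOn f (Ioi 0))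
    (hcrit : ∀ t ∈ Ioi 0, deriv f t = 0 → t = m) (hmax : IsMaxOn f (Ioi 0) m) (hm : 0 < m) :
    ∀ t ∈ Ioi m, deriv f t < 0 := by
  intro t ht
  rcases deriv_pos_or_deriv_neg_of_ne_zero ordConnected_Ioi
    fun x hx h => hx.ne' (hcrit x (hm.trans hx) h) with hpos | hneg
  · have hmono : StrictMonoOn f (Ici m) :=
      strictMonoOn_of_deriv_pos (convex_Ici m) (hf.mono fun x hx => hm.trans_le hx)
        (by rwa [interior_Ici])
    exact absurd (hmax (hm.trans ht)) (hmono self_mem_Ici (mem_Ici.2 ht.le) ht).not_ge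
  · exact hneg t ht

theorem exists_mem_Ioo_eq_of_eventually_lt (hf : ContinuousOn f (Ioi 0)) {c : ℝ}
    (hm : 0 < m) (hc : c < f m) (hleft : ∀ᶠ t in 𝓝[>] 0, f t < c) :
    ∃ t ∈ Ioo 0 m, f t = c := by
  obtain ⟨a, hac, ha⟩ := (hleft.and (Ioo_mem_nhdsGT hm)).exists
  obtain ⟨t, ht, rfl⟩ := intermediate_value_Icc ha.2.le
    (hf.mono fun x hx => ha.1.trans_le hx.1) ⟨hac.le, hc.le⟩
  exact ⟨t, ⟨ha.1.trans_le ht.1, ht.2.lt_of_ne (by rintro rfl; exact hc.ne rfl)⟩, rfl⟩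

theorem exists_mem_Ioi_eq_of_eventually_lt (hf : ContinuousOn f (Ioi 0)) {c : ℝ}
    (hm : 0 < m) (hc : c < f m) (hright : ∀ᶠ t in atTop, f t < c) :
    ∃ t ∈ Ioi m, f t = c := by
  obtain ⟨b, hbc, hb⟩ := (hright.and (eventually_gt_atTop m)).exists
  obtain ⟨t, ht, rfl⟩ := intermediate_value_Icc' hb.le
    (hf.mono fun x hx => hm.trans_le hx.1) ⟨hbc.le, hc.le⟩
  exact ⟨t, ht.1.lt_of_ne (by rintro rfl; exact hc.ne rfl), rfl⟩

theorem exists_two_eq_of_isMaxOn_of_unique_critical (hf : ContinuousOn f (Ioi 0))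
    (hcrit : ∀ t ∈ Ioi 0, deriv f t = 0 → t = m) (hmax : IsMaxOn f (Ioi 0) m) (hm : 0 < m)
    {c : ℝ} (hc : c < f m) (hleft : ∀ᶠ t in 𝓝[>] 0, f t < c)
    (hright : ∀ᶠ t in atTop, f t < c) :
    ∃ t₁ t₂ : ℝ, 0 < t₁ ∧ t₁ < m ∧ m < t₂ ∧ f t₁ = c ∧ f t₂ = c ∧
      0 < deriv f t₁ ∧ deriv f t₂ < 0 ∧ ∀ t, 0 < t → f t = c → t = t₁ ∨ t = t₂ := by
  have hpos := deriv_pos_of_isMaxOn_of_unique_critical hf hcrit hmax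
  have hneg := deriv_neg_of_isMaxOn_of_unique_critical hf hcrit hmax hm
  have hmono : StrictMonoOn f (Ioc 0 m) :=
    strictMonoOn_of_deriv_pos (convex_Ioc 0 m) (hf.mono Ioc_subset_Ioi_self)
      (by rwa [interior_Ioc])
  have hanti : StrictAntiOn f (Ici m) :=
    strictAntiOn_of_deriv_neg (convex_Ici m) (hf.mono fun x hx => hm.trans_le hx)
      (by rwa [interior_Ici])
  obtain ⟨t₁, ht₁, hft₁⟩ := exists_mem_Ioo_eq_of_eventually_lt hf hm hc hleft
  obtain ⟨t₂, ht₂, hft₂⟩ := exists_mem_Ioi_eq_of_eventually_lt hf hm hc hright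
  refine ⟨t₁, t₂, ht₁.1, ht₁.2, ht₂, hft₁, hft₂, hpos t₁ ht₁, hneg t₂ ht₂, fun t ht hft => ?_⟩
  rcases le_total t m with htm | htm
  · exact .inl (hmono.injOn ⟨ht, htm⟩ ⟨ht₁.1, ht₁.2.le⟩ (hft.trans hft₁.symm))
  · exact .inr (hanti.injOn htm (mem_Ici.2 ht₂.le) (hft.trans hft₂.symm))

end UniqueCriticalPoint

section PowerSum

variable (A B C : ℝ) {a b c : ℝ}

theorem continuousOn_rpow_sum :
    ContinuousOn (fun t : ℝ => A * t ^ a + B * t ^ b - C * t ^ c) (Ioi 0) := fun t ht =>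
  ContinuousAt.continuousWithinAt (by fun_prop (disch := exact Or.inl (ne_of_gt ht)))

theorem tendsto_rpow_sum_atTop (ha : a < 0) (hb : b < 0) (hc : c < 0) :
    Tendsto (fun t : ℝ => A * t ^ a + B * t ^ b - C * t ^ c) atTop (𝓝 0) := by
  have h (e : ℝ) (he : e < 0) : Tendsto (fun t : ℝ => t ^ e) atTop (𝓝 0) := by
    simpa using tendsto_rpow_neg_atTop (neg_pos.2 he)
  simpa using (((h a ha).const_mul A).add ((h b hb).const_mul B)).sub ((h c hc).const_mul C)

theorem tendsto_rpow_sum_nhdsGT_zero (hC : 0 < C) (hac : c < a) (hbc : c < b) (hc : c < 0) :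
    Tendsto (fun t : ℝ => A * t ^ a + B * t ^ b - C * t ^ c) (𝓝[>] 0) atBot := by
  have h (e : ℝ) (he : 0 < e) : Tendsto (fun t : ℝ => t ^ e) (𝓝[>] 0) (𝓝 0) := by
    simpa [Real.zero_rpow he.ne'] using
      (Real.continuousAt_rpow_const 0 e (.inr he.le)).tendsto.mono_left nhdsWithin_le_nhds
  have hbracket : Tendsto (fun t : ℝ => A * t ^ (a - c) + B * t ^ (b - c) - C) (𝓝[>] 0)
      (𝓝 (-C)) := by
    simpa using (((h _ (sub_pos.2 hac)).const_mul A).add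
      ((h _ (sub_pos.2 hbc)).const_mul B)).sub (tendsto_const_nhds (x := C))
  refine ((tendsto_rpow_neg_nhdsGT_zero hc).atTop_mul_neg (neg_neg_of_pos hC) hbracket).congr' ?_
  filter_upwards [self_mem_nhdsWithin] with t (ht : 0 < t)
  have hsplit (e : ℝ) : t ^ e = t ^ c * t ^ (e - c) := by rw [← Real.rpow_add ht, add_sub_cancel]
  rw [hsplit a, hsplit b]
  ring

end PowerSum

theorem stmt_6_general (p q θ α A B C D tmax : ℝ)
    (hα0 : 0 < α) (hp : 1 < p) (hθ : 1 < θ) (hpq : p * θ < q)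
    (hC : 0 < C)
    (ψ : ℝ → ℝ)
    (hψ : ∀ t, 0 < t →
      ψ t = A * t ^ (p - q) + B * t ^ (p * θ - q) - C * t ^ (1 - α - q))
    (htmax : 0 < tmax)
    (huniq : ∀ t, 0 < t → deriv ψ t = 0 → t = tmax)
    (hmax : ∀ t, 0 < t → ψ t ≤ ψ tmax)
    (hD0 : 0 < q * D) (hD : q * D < ψ tmax) :
    ∃ t₁ t₂ : ℝ, 0 < t₁ ∧ t₁ < tmax ∧ tmax < t₂ ∧
      ψ t₁ = q * D ∧ ψ t₂ = q * D ∧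
      0 < deriv ψ t₁ ∧ deriv ψ t₂ < 0 ∧
      (∀ t, 0 < t → ψ t = q * D → t = t₁ ∨ t = t₂) := by
  have hpθ : p < p * θ := lt_mul_of_one_lt_right (by linarith) hθ
  have hψ' : EqOn (fun t => A * t ^ (p - q) + B * t ^ (p * θ - q) - C * t ^ (1 - α - q)) ψ
      (Ioi 0) := fun t ht => (hψ t ht).symm
  have hleft : ∀ᶠ t in 𝓝[>] 0, ψ t < q * D :=
    ((tendsto_rpow_sum_nhdsGT_zero A B C hC (by linarith) (by linarith) (by linarith)).congr'
      (eventuallyEq_nhdsWithin_of_eqOn hψ')).eventually_lt_atBot _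
  have hright : ∀ᶠ t in atTop, ψ t < q * D :=
    ((tendsto_rpow_sum_atTop A B C (a := p - q) (b := p * θ - q) (c := 1 - α - q)
      (by linarith) (by linarith) (by linarith)).congr'
      (eventually_of_mem (Ioi_mem_atTop 0) hψ')).eventually_lt_const hD0
  exact exists_two_eq_of_isMaxOn_of_unique_critical ((continuousOn_rpow_sum A B C).congr hψ'.symm)
    huniq hmax htmax hD hleft hright

/-- If t_max is the unique critical point and global maximizer of ψ and 0 < q·D < ψ(t_max),
then the equation ψ(t) = q·D has exactly two solutions t₁ < t_max < t₂ in (0,∞), with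
ψ'(t₁) > 0 and ψ'(t₂) < 0. -/
theorem stmt_6 (p q θ α A B C D tmax : ℝ)
    (hα0 : 0 < α) (hα1 : α < 1) (hp : 1 < p) (hθ : 1 < θ) (hpq : p * θ < q)
    (hA : 0 < A) (hB : 0 < B) (hC : 0 < C)
    (ψ : ℝ → ℝ)
    (hψ : ∀ t, 0 < t →
      ψ t = A * t ^ (p - q) + B * t ^ (p * θ - q) - C * t ^ (1 - α - q))
    (htmax : 0 < tmax) (hcrit : deriv ψ tmax = 0)
    (huniq : ∀ t, 0 < t → deriv ψ t = 0 → t = tmax)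
    (hmax : ∀ t, 0 < t → ψ t ≤ ψ tmax)
    (hD0 : 0 < q * D) (hD : q * D < ψ tmax) :
    ∃ t₁ t₂ : ℝ, 0 < t₁ ∧ t₁ < tmax ∧ tmax < t₂ ∧
      ψ t₁ = q * D ∧ ψ t₂ = q * D ∧
      0 < deriv ψ t₁ ∧ deriv ψ t₂ < 0 ∧
      (∀ t, 0 < t → ψ t = q * D → t = t₁ ∨ t = t₂) :=
  stmt_6_general p q θ α A B C D tmax hα0 hp hθ hpq hC ψ hψ htmax huniq hmax hD0 hD
end

section
/- Suppose D > 0 and q·D < sup_{t>0} ψ(t), and let 0 < t₁ < t_max < t₂ be the two solutions of ψ(t) = q·D, where t_max is the unique maximizer of ψ. Then φ is strictly decreasing on (0, t₁), strictly increasing on (t₁, t₂), and strictly decreasing on (t₂, ∞); in particular φ(t₁) = min{ φ(t) : 0 < t ≤ t₁ } (indeed φ(t₁) ≤ φ(t) for all 0 < t ≤ t₂) and φ(t₂) = max{ φ(t) : t ≥ t_max }. -/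
open Set Filter Topology

/-!
Up to the positive factor `t ^ (q - 1)`, the derivative of `φ` is `ψ t - q * D`, so the
monotonicity of `φ` is the sign pattern of `ψ - q * D`. This function is negative near `0`
(where the singular term `- C * t ^ (1 - α - q)` dominates) and near `∞` (where `ψ → 0 < q * D`),
and positive at `tmax`, because `ψ tmax ≥ ψ t₁ = q * D` and `tmax` is not a level point.
On each of the connected sets `(0, t₁)`, `(t₁, t₂)`, `(t₂, ∞)` it does not vanish, so its sign
there is constant: `-`, `+`, `-`.
-/

section Connected

variable {X α : Type*} [TopologicalSpace X] [LinearOrder α] [TopologicalSpace α]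
  [OrderClosedTopology α] {s : Set X} {f : X → α} {c : α} {a b : X}

theorem IsPreconnected.lt_of_forall_ne (hs : IsPreconnected s) (hf : ContinuousOn f s)
    (hne : ∀ x ∈ s, f x ≠ c) (ha : a ∈ s) (hb : b ∈ s) (hfa : f a < c) : f b < c := by
  by_contra! hfb
  obtain ⟨x, hx, hfx⟩ := hs.intermediate_value ha hb hf ⟨hfa.le, hfb⟩
  exact hne x hx hfx

theorem IsPreconnected.lt_of_forall_ne' (hs : IsPreconnected s) (hf : ContinuousOn f s)
    (hne : ∀ x ∈ s, f x ≠ c) (ha : a ∈ s) (hb : b ∈ s) (hfa : c < f a) : c < f b :=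
  (hne b hb).symm.lt_of_le <| not_lt.mp fun hfb => (hs.lt_of_forall_ne hf hne hb ha hfb).not_gt hfa

end Connected

theorem ContinuousOn.sign_pattern_of_levelSet {f : ℝ → ℝ} {c m t₁ t₂ : ℝ}
    (hf : ContinuousOn f (Ioi 0)) (ht₁ : 0 < t₁) (h₁m : t₁ < m) (hm₂ : m < t₂)
    (hlevel : ∀ t, 0 < t → f t = c → t = t₁ ∨ t = t₂) (hm : c < f m)
    (hzero : ∀ᶠ t in 𝓝[>] 0, f t < c) (htop : ∀ᶠ t in atTop, f t < c) :
    (∀ t ∈ Ioo 0 t₁, f t < c) ∧ (∀ t ∈ Ioo t₁ t₂, c < f t) ∧ ∀ t ∈ Ioi t₂, f t < c := by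
  have hne : ∀ s ⊆ Ioi 0, t₁ ∉ s → t₂ ∉ s → ∀ t ∈ s, f t ≠ c := fun s hs h₁ h₂ t ht hft => by
    rcases hlevel t (hs ht) hft with rfl | rfl <;> contradiction
  have hsub₁ : Ioo 0 t₁ ⊆ Ioi 0 := Ioo_subset_Ioi_self
  have hsub₂ : Ioo t₁ t₂ ⊆ Ioi 0 := fun t ht => ht₁.trans ht.1
  have hsub₃ : Ioi t₂ ⊆ Ioi 0 := Ioi_subset_Ioi (by linarith)
  obtain ⟨a, hfa, ha⟩ := (hzero.and (Ioo_mem_nhdsGT ht₁)).exists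
  obtain ⟨b, hfb, hb⟩ := (htop.and (eventually_gt_atTop t₂)).exists
  refine ⟨fun t ht => ?_, fun t ht => ?_, fun t ht => ?_⟩
  · exact isPreconnected_Ioo.lt_of_forall_ne (hf.mono hsub₁)
      (hne _ hsub₁ (by simp) fun h => by linarith [h.2]) ha ht hfa
  · exact isPreconnected_Ioo.lt_of_forall_ne' (hf.mono hsub₂)
      (hne _ hsub₂ (by simp) (by simp)) ⟨h₁m, hm₂⟩ ht hm
  · exact isPreconnected_Ioi.lt_of_forall_ne (hf.mono hsub₃)
      (hne _ hsub₃ (fun h => by linarith [mem_Ioi.mp h]) (by simp)) hb ht hfb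

theorem strictMonoOn_of_hasDerivAt_pos {f f' : ℝ → ℝ} {s : Set ℝ} (hs : Convex ℝ s)
    (hf : ∀ x ∈ s, HasDerivAt f (f' x) x) (hf' : ∀ x ∈ interior s, 0 < f' x) :
    StrictMonoOn f s :=
  strictMonoOn_of_deriv_pos hs (fun x hx => (hf x hx).continuousAt.continuousWithinAt)
    fun x hx => (hf x (interior_subset hx)).deriv ▸ hf' x hx

theorem strictAntiOn_of_hasDerivAt_neg {f f' : ℝ → ℝ} {s : Set ℝ} (hs : Convex ℝ s)
    (hf : ∀ x ∈ s, HasDerivAt f (f' x) x) (hf' : ∀ x ∈ interior s, f' x < 0) :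
    StrictAntiOn f s :=
  strictAntiOn_of_deriv_neg hs (fun x hx => (hf x hx).continuousAt.continuousWithinAt)
    fun x hx => (hf x (interior_subset hx)).deriv ▸ hf' x hx

theorem strictAntiOn_strictMonoOn_strictAntiOn_of_hasDerivAt {f f' : ℝ → ℝ} {t₁ t₂ : ℝ}
    (ht₁ : 0 < t₁) (ht₁₂ : t₁ < t₂) (hf : ∀ t, 0 < t → HasDerivAt f (f' t) t)
    (h₁ : ∀ t ∈ Ioo 0 t₁, f' t < 0) (h₂ : ∀ t ∈ Ioo t₁ t₂, 0 < f' t)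
    (h₃ : ∀ t ∈ Ioi t₂, f' t < 0) :
    StrictAntiOn f (Ioc 0 t₁) ∧ StrictMonoOn f (Icc t₁ t₂) ∧ StrictAntiOn f (Ici t₂) := by
  refine ⟨strictAntiOn_of_hasDerivAt_neg (convex_Ioc 0 t₁) (fun t ht => hf t ht.1) ?_,
    strictMonoOn_of_hasDerivAt_pos (convex_Icc t₁ t₂) (fun t ht => hf t (ht₁.trans_le ht.1)) ?_,
    strictAntiOn_of_hasDerivAt_neg (convex_Ici t₂)
      (fun t ht => hf t (ht₁.trans (ht₁₂.trans_le ht))) ?_⟩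
  · simpa only [interior_Ioc] using h₁
  · simpa only [interior_Icc] using h₂
  · simpa only [interior_Ici] using h₃

theorem isMinOn_isMaxOn_of_antitoneOn_monotoneOn_antitoneOn {f : ℝ → ℝ} {a t₁ t₂ : ℝ}
    (ha : a < t₁) (ht₁₂ : t₁ ≤ t₂) (h₁ : AntitoneOn f (Ioc a t₁)) (h₂ : MonotoneOn f (Icc t₁ t₂))
    (h₃ : AntitoneOn f (Ici t₂)) :
    IsMinOn f (Ioc a t₂) t₁ ∧ IsMaxOn f (Ici t₁) t₂ := by
  refine ⟨isMinOn_iff.mpr fun t ht => ?_, isMaxOn_iff.mpr fun t ht => ?_⟩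
  · rcases le_total t t₁ with h | h
    · exact h₁ ⟨ht.1, h⟩ ⟨ha, le_rfl⟩ h
    · exact h₂ ⟨le_rfl, ht₁₂⟩ ⟨h, ht.2⟩ h
  · rcases le_total t t₂ with h | h
    · exact h₂ ⟨ht, h⟩ ⟨ht₁₂, le_rfl⟩ h
    · exact h₃ (le_refl t₂) h h

noncomputable def nehariPsi (p q θ α A B C t : ℝ) : ℝ :=
  A * t ^ (p - q) + B * t ^ (p * θ - q) - C * t ^ (1 - α - q)

noncomputable def fiberMap (p q θ α A B C D t : ℝ) : ℝ :=
  t ^ p / p * A + t ^ (p * θ) / (p * θ) * B - t ^ (1 - α) / (1 - α) * C - t ^ q * D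

section Fibering

variable {p q θ α A B C : ℝ}

theorem continuousOn_nehariPsi : ContinuousOn (nehariPsi p q θ α A B C) (Ioi 0) := by
  intro t ht
  unfold nehariPsi
  fun_prop (disch := exact Or.inl (ne_of_gt ht))

theorem eventually_nehariPsi_neg (hC : 0 < C) (hp : 1 - α < p) (hpθ : 1 - α < p * θ) :
    ∀ᶠ t in 𝓝[>] 0, nehariPsi p q θ α A B C t < 0 := by
  set g : ℝ → ℝ := fun t => A * t ^ (p - (1 - α)) + B * t ^ (p * θ - (1 - α)) - C
  have hg : ContinuousAt g 0 := by
    fun_prop (disch := (right; linarith))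
  have hg0 : g 0 < 0 := by
    simp [g, Real.zero_rpow (sub_pos.mpr hp).ne', Real.zero_rpow (sub_pos.mpr hpθ).ne', hC]
  filter_upwards [nhdsWithin_le_nhds (hg.eventually_lt continuousAt_const hg0),
    self_mem_nhdsWithin] with t hgt (ht : 0 < t)
  have hmul : ∀ r, t ^ (1 - α - q) * t ^ (r - (1 - α)) = t ^ (r - q) := fun r => by
    rw [← Real.rpow_add ht]; ring_nf
  have hfactor : nehariPsi p q θ α A B C t = t ^ (1 - α - q) * g t := by
    simp only [nehariPsi, g]
    rw [mul_sub, mul_add, mul_left_comm _ A, mul_left_comm _ B, hmul, hmul]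
    ring
  rw [hfactor]
  exact mul_neg_of_pos_of_neg (Real.rpow_pos_of_pos ht _) hgt

theorem tendsto_nehariPsi_atTop (hp : p < q) (hpθ : p * θ < q) (hα : 1 - α < q) :
    Tendsto (nehariPsi p q θ α A B C) atTop (𝓝 0) := by
  have hpow : ∀ r < q, ∀ K : ℝ, Tendsto (fun t : ℝ => K * t ^ (r - q)) atTop (𝓝 0) :=
    fun r hr K => by
      simpa [neg_sub] using (tendsto_rpow_neg_atTop (sub_pos.mpr hr)).const_mul K
  unfold nehariPsi
  simpa using ((hpow p hp A).add (hpow _ hpθ B)).sub (hpow _ hα C)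

theorem hasDerivAt_fiberMap (D : ℝ) (hp : p ≠ 0) (hpθ : p * θ ≠ 0) (hα : α ≠ 1) {t : ℝ}
    (ht : 0 < t) :
    HasDerivAt (fiberMap p q θ α A B C D)
      (t ^ (q - 1) * (nehariPsi p q θ α A B C t - q * D)) t := by
  have hα' : 1 - α ≠ 0 := sub_ne_zero.mpr hα.symm
  have hpow := fun r : ℝ => Real.hasDerivAt_rpow_const (x := t) (p := r) (Or.inl ht.ne')
  refine ((((hpow p).div_const p).mul_const A).add (((hpow (p * θ)).div_const (p * θ)).mul_const B)
    |>.sub (((hpow (1 - α)).div_const (1 - α)).mul_const C)).sub ((hpow q).mul_const D)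
    |>.congr_deriv ?_
  have hmul : ∀ r, t ^ (q - 1) * t ^ (r - q) = t ^ (r - 1) := fun r => by
    rw [← Real.rpow_add ht]; ring_nf
  rw [mul_div_cancel_left₀ _ hp, mul_div_cancel_left₀ _ hpθ, mul_div_cancel_left₀ _ hα', ← hmul p,
    ← hmul (p * θ), ← hmul (1 - α)]
  simp only [nehariPsi]
  ring

end Fibering

theorem stmt_7_general (p q θ α A B C D tmax t₁ t₂ : ℝ)
    (hα0 : 0 < α) (hα1 : α < 1) (hp : 1 < p) (hθ : 1 < θ) (hpq : p * θ < q)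
    (hC : 0 < C)
    (ψ φ : ℝ → ℝ)
    (hψ : ∀ t, 0 < t →
      ψ t = A * t ^ (p - q) + B * t ^ (p * θ - q) - C * t ^ (1 - α - q))
    (hφ : ∀ t, 0 < t →
      φ t = t ^ p / p * A + t ^ (p * θ) / (p * θ) * B
        - t ^ (1 - α) / (1 - α) * C - t ^ q * D)
    (hD : 0 < D)
    (hmax : ∀ t, 0 < t → ψ t ≤ ψ tmax)
    (ht₁ : 0 < t₁) (h₁m : t₁ < tmax) (hm₂ : tmax < t₂)
    (hψ₁ : ψ t₁ = q * D)
    (honly : ∀ t, 0 < t → ψ t = q * D → t = t₁ ∨ t = t₂) :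
    StrictAntiOn φ (Set.Ioo 0 t₁) ∧ StrictMonoOn φ (Set.Ioo t₁ t₂) ∧
      StrictAntiOn φ (Set.Ioi t₂) ∧
      (∀ t, 0 < t → t ≤ t₂ → φ t₁ ≤ φ t) ∧
      (∀ t, tmax ≤ t → φ t ≤ φ t₂) := by
  have hq : 1 < q := by nlinarith
  have ht₁₂ : t₁ < t₂ := h₁m.trans hm₂
  have hψ_eq : ∀ t, 0 < t → ψ t = nehariPsi p q θ α A B C t := hψ
  have hφ' : ∀ t, 0 < t → HasDerivAt φ (t ^ (q - 1) * (ψ t - q * D)) t := fun t ht => by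
    rw [hψ_eq t ht]
    exact (hasDerivAt_fiberMap D (by positivity) (by positivity) hα1.ne ht).congr_of_eventuallyEq
      (eventually_of_mem (Ioi_mem_nhds ht) hφ)
  have hψm : q * D < ψ tmax := (hψ₁ ▸ hmax t₁ ht₁).lt_of_ne fun h => by
    rcases honly tmax (ht₁.trans h₁m) h.symm with h | h <;> linarith
  have hneg : ∀ᶠ t in 𝓝[>] 0, nehariPsi p q θ α A B C t < 0 :=
    eventually_nehariPsi_neg hC (by linarith) (by nlinarith)
  have hlim : Tendsto (nehariPsi p q θ α A B C) atTop (𝓝 0) :=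
    tendsto_nehariPsi_atTop (by nlinarith) hpq (by linarith)
  obtain ⟨hleft, hmid, hright⟩ := (continuousOn_nehariPsi.congr hψ_eq).sign_pattern_of_levelSet
    ht₁ h₁m hm₂ honly hψm
    (by filter_upwards [hneg, self_mem_nhdsWithin] with t h (ht : 0 < t)
        exact hψ_eq t ht ▸ h.trans (by positivity))
    (by filter_upwards [hlim.eventually_lt_const (by positivity : (0 : ℝ) < q * D),
          eventually_gt_atTop 0] with t h ht
        rwa [hψ_eq t ht])
  obtain ⟨hdec₁, hinc, hdec₂⟩ :=
    strictAntiOn_strictMonoOn_strictAntiOn_of_hasDerivAt ht₁ ht₁₂ hφ'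
      (fun t ht => mul_neg_of_pos_of_neg (Real.rpow_pos_of_pos ht.1 _) (sub_neg.mpr (hleft t ht)))
      (fun t ht => mul_pos (Real.rpow_pos_of_pos (ht₁.trans ht.1) _) (sub_pos.mpr (hmid t ht)))
      (fun t ht => mul_neg_of_pos_of_neg (Real.rpow_pos_of_pos (ht₁.trans (ht₁₂.trans ht)) _)
        (sub_neg.mpr (hright t ht)))
  obtain ⟨hminOn, hmaxOn⟩ := isMinOn_isMaxOn_of_antitoneOn_monotoneOn_antitoneOn ht₁ ht₁₂.le
    hdec₁.antitoneOn hinc.monotoneOn hdec₂.antitoneOn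
  exact ⟨hdec₁.mono Ioo_subset_Ioc_self, hinc.mono Ioo_subset_Icc_self,
    hdec₂.mono Ioi_subset_Ici_self, fun t ht ht' => isMinOn_iff.mp hminOn t ⟨ht, ht'⟩,
    fun t ht => isMaxOn_iff.mp hmaxOn t (h₁m.le.trans ht)⟩

/-- If D > 0, q·D < sup_{t>0} ψ(t) and t₁ < t_max < t₂ are the two solutions of ψ(t) = q·D,
then the fiber map φ strictly decreases on (0,t₁), strictly increases on (t₁,t₂), strictly
decreases on (t₂,∞); in particular φ(t₁) ≤ φ(t) for all 0 < t ≤ t₂ and φ(t₂) = max over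
[t_max, ∞) of φ. -/
theorem stmt_7 (p q θ α A B C D tmax t₁ t₂ : ℝ)
    (hα0 : 0 < α) (hα1 : α < 1) (hp : 1 < p) (hθ : 1 < θ) (hpq : p * θ < q)
    (hA : 0 < A) (hB : 0 < B) (hC : 0 < C)
    (ψ φ : ℝ → ℝ)
    (hψ : ∀ t, 0 < t →
      ψ t = A * t ^ (p - q) + B * t ^ (p * θ - q) - C * t ^ (1 - α - q))
    (hφ : ∀ t, 0 < t →
      φ t = t ^ p / p * A + t ^ (p * θ) / (p * θ) * B
        - t ^ (1 - α) / (1 - α) * C - t ^ q * D)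
    (hD : 0 < D) (hsup : q * D < sSup (ψ '' Set.Ioi 0))
    (htmax : 0 < tmax) (hmax : ∀ t, 0 < t → ψ t ≤ ψ tmax)
    (ht₁ : 0 < t₁) (h₁m : t₁ < tmax) (hm₂ : tmax < t₂)
    (hψ₁ : ψ t₁ = q * D) (hψ₂ : ψ t₂ = q * D)
    (honly : ∀ t, 0 < t → ψ t = q * D → t = t₁ ∨ t = t₂) :
    StrictAntiOn φ (Set.Ioo 0 t₁) ∧ StrictMonoOn φ (Set.Ioo t₁ t₂) ∧
      StrictAntiOn φ (Set.Ioi t₂) ∧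
      (∀ t, 0 < t → t ≤ t₂ → φ t₁ ≤ φ t) ∧
      (∀ t, tmax ≤ t → φ t ≤ φ t₂) :=
  stmt_7_general p q θ α A B C D tmax t₁ t₂ hα0 hα1 hp hθ hpq hC ψ φ hψ hφ hD hmax ht₁ h₁m hm₂ hψ₁
    honly
end

section
/- Let p, q, θ, α be real numbers with 0 < α < 1 < p, θ > 1 and p·θ < q, let A, B, C > 0 and E be real numbers satisfying A + B − C − q·E = 0 and (q+α−1)·C > (q−p)·A + (q−p·θ)·B. Then A/p + B/(p·θ) − C/(1−α) − E ≤ −((q−p)(p+α−1)/(q·p·(1−α)))·A − ((q−p·θ)(p·θ+α−1)/(q·p·θ·(1−α)))·B < 0. -/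
/-!
On the Nehari set the constraint `A + B - C - q E = 0` eliminates `E`, after which the gap between
the claimed bound and the energy is exactly `((q + α - 1) C - (q - p) A - (q - pθ) B) / (q (1 - α))`,
positive by the second-order condition. The bound itself is negative because both of its
coefficients are positive once `1 < p < pθ < q` and `0 < α < 1`.
-/

open Set Filter Topology

section NehariEnergy

variable {q α r s A B C E : ℝ}

lemma nehari_coeff_pos (hα0 : 0 < α) (hα1 : α < 1) (hr : 1 < r) (hrq : r < q) :
    0 < (q - r) * (r + α - 1) / (q * r * (1 - α)) := by
  have hq : 0 < q := by linarith
  have hr0 : 0 < r := by linarith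
  have h1α : 0 < 1 - α := by linarith
  exact div_pos (mul_pos (by linarith) (by linarith)) (by positivity)

lemma nehari_bound_sub_energy_eq (hq : q ≠ 0) (hr : r ≠ 0) (hs : s ≠ 0) (hα1 : α ≠ 1)
    (hNehari : A + B - C - q * E = 0) :
    (-((q - r) * (r + α - 1) / (q * r * (1 - α))) * A
        - ((q - s) * (s + α - 1) / (q * s * (1 - α))) * B)
      - (A / r + B / s - C / (1 - α) - E)
      = ((q + α - 1) * C - ((q - r) * A + (q - s) * B)) / (q * (1 - α)) := by
  have h1α : 1 - α ≠ 0 := sub_ne_zero.mpr hα1.symm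
  have hE : E = (A + B - C) / q := by field_simp; linarith
  subst hE
  field_simp
  ring

lemma nehari_energy_le_bound (hq : 0 < q) (hr : r ≠ 0) (hs : s ≠ 0) (hα1 : α < 1)
    (hNehari : A + B - C - q * E = 0)
    (hSecond : (q - r) * A + (q - s) * B < (q + α - 1) * C) :
    A / r + B / s - C / (1 - α) - E ≤
      -((q - r) * (r + α - 1) / (q * r * (1 - α))) * A
        - ((q - s) * (s + α - 1) / (q * s * (1 - α))) * B := by
  have hgap := nehari_bound_sub_energy_eq hq.ne' hr hs hα1.ne hNehari
  have h1α : 0 < 1 - α := by linarith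
  have : 0 < ((q + α - 1) * C - ((q - r) * A + (q - s) * B)) / (q * (1 - α)) :=
    div_pos (by linarith) (by positivity)
  linarith

lemma nehari_bound_neg (hα0 : 0 < α) (hα1 : α < 1) (hr : 1 < r) (hrq : r < q) (hs : 1 < s)
    (hsq : s < q) (hA : 0 < A) (hB : 0 < B) :
    -((q - r) * (r + α - 1) / (q * r * (1 - α))) * A
        - ((q - s) * (s + α - 1) / (q * s * (1 - α))) * B < 0 := by
  have := mul_pos (nehari_coeff_pos hα0 hα1 hr hrq) hA
  have := mul_pos (nehari_coeff_pos hα0 hα1 hs hsq) hB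
  linarith

end NehariEnergy

theorem stmt_9_general (p q θ α A B C E : ℝ)
    (hα0 : 0 < α) (hα1 : α < 1) (hp : 1 < p) (hθ : 1 < θ) (hpq : p * θ < q)
    (hA : 0 < A) (hB : 0 < B)
    (h1 : A + B - C - q * E = 0)
    (h2 : (q - p) * A + (q - p * θ) * B < (q + α - 1) * C) :
    A / p + B / (p * θ) - C / (1 - α) - E ≤
      -((q - p) * (p + α - 1) / (q * p * (1 - α))) * A
        - ((q - p * θ) * (p * θ + α - 1) / (q * p * θ * (1 - α))) * B ∧
    -((q - p) * (p + α - 1) / (q * p * (1 - α))) * A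
        - ((q - p * θ) * (p * θ + α - 1) / (q * p * θ * (1 - α))) * B < 0 := by
  have hp0 : 0 < p := by linarith
  have hpθ : p < p * θ := lt_mul_right hp0 hθ
  rw [mul_assoc q p θ]
  exact ⟨nehari_energy_le_bound (by linarith) hp0.ne' (by linarith) hα1 h1 h2,
    nehari_bound_neg hα0 hα1 hp (by linarith) (by linarith) hpq hA hB⟩

/-- Algebraic content of Corollary 4.1: on the Nehari set N_λ⁺ the energy
A/p + B/(pθ) − C/(1−α) − E is negative, with the stated quantitative bound. -/
theorem stmt_9 (p q θ α A B C E : ℝ)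
    (hα0 : 0 < α) (hα1 : α < 1) (hp : 1 < p) (hθ : 1 < θ) (hpq : p * θ < q)
    (hA : 0 < A) (hB : 0 < B) (hC : 0 < C)
    (h1 : A + B - C - q * E = 0)
    (h2 : (q - p) * A + (q - p * θ) * B < (q + α - 1) * C) :
    A / p + B / (p * θ) - C / (1 - α) - E ≤
      -((q - p) * (p + α - 1) / (q * p * (1 - α))) * A
        - ((q - p * θ) * (p * θ + α - 1) / (q * p * θ * (1 - α))) * B ∧
    -((q - p) * (p + α - 1) / (q * p * (1 - α))) * A
        - ((q - p * θ) * (p * θ + α - 1) / (q * p * θ * (1 - α))) * B < 0 :=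
  stmt_9_general p q θ α A B C E hα0 hα1 hp hθ hpq hA hB h1 h2
end

section
/- Let p, q, θ, α be real numbers with 0 < α < 1 < p, θ > 1 and p·θ < q, and let a, b, K, x > 0 be real numbers. If (q−p)·a·x^p + (q−p·θ)·b·x^(p·θ) ≤ (q+α−1)·K·x^(1−α), then x ≤ ( (q+α−1)·K / (2·√(a·b·(q−p)·(q−p·θ))) )^(2/(p·θ+p+2α−2)). -/
/-!
Put `A = (q - p) a` and `B = (q - pθ) b`. By AM-GM the left-hand side is at least
`2 √(AB) x^((p + pθ)/2)`; dividing by `x^(1-α)` leaves `2 √(AB) x^e ≤ (q + α - 1) K`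
with `e = (pθ + p + 2α - 2)/2 > 0`, and taking `e`-th roots gives the bound.
-/

open Real

theorem two_mul_sqrt_mul_rpow_le_add {A B x : ℝ} (hA : 0 ≤ A) (hB : 0 ≤ B) (hx : 0 < x)
    (r s : ℝ) : 2 * √(A * B) * x ^ ((r + s) / 2) ≤ A * x ^ r + B * x ^ s := by
  have hsq (C t : ℝ) (hC : 0 ≤ C) : (√C * x ^ (t / 2)) ^ 2 = C * x ^ t := by
    rw [mul_pow, sq_sqrt hC, ← rpow_natCast, ← rpow_mul hx.le]
    norm_num
  calc 2 * √(A * B) * x ^ ((r + s) / 2)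
      = 2 * (√A * x ^ (r / 2)) * (√B * x ^ (s / 2)) := by
        rw [sqrt_mul hA, add_div, rpow_add hx]
        ring
    _ ≤ (√A * x ^ (r / 2)) ^ 2 + (√B * x ^ (s / 2)) ^ 2 := two_mul_le_add_sq _ _
    _ = A * x ^ r + B * x ^ s := by rw [hsq A r hA, hsq B s hB]

theorem le_rpow_inv_of_mul_rpow_add_le {m x e t C : ℝ} (hm : 0 < m) (hx : 0 < x) (he : 0 < e)
    (h : m * x ^ (e + t) ≤ C * x ^ t) : x ≤ (C / m) ^ e⁻¹ := by
  have hxe : x ^ e ≤ C / m := by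
    rw [rpow_add hx, ← mul_assoc] at h
    rw [le_div_iff₀' hm]
    exact le_of_mul_le_mul_right h (rpow_pos_of_pos hx t)
  exact (le_rpow_inv_iff_of_pos hx.le ((rpow_pos_of_pos hx e).le.trans hxe) he).2 hxe

theorem stmt_10_general (p q θ α a b K x : ℝ)
    (hα0 : 0 < α) (hp : 1 < p) (hθ : 1 < θ) (hpq : p * θ < q)
    (ha : 0 < a) (hb : 0 < b) (hx : 0 < x)
    (h : (q - p) * a * x ^ p + (q - p * θ) * b * x ^ (p * θ) ≤
      (q + α - 1) * K * x ^ (1 - α)) :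
    x ≤ ((q + α - 1) * K / (2 * Real.sqrt (a * b * (q - p) * (q - p * θ))))
        ^ (2 / (p * θ + p + 2 * α - 2)) := by
  have hqpθ : 0 < q - p * θ := by linarith
  have hqp : 0 < q - p := by nlinarith
  have he : 0 < (p * θ + p + 2 * α - 2) / 2 := by
    nlinarith [mul_pos (sub_pos.2 hp) (sub_pos.2 hθ)]
  have hamgm := two_mul_sqrt_mul_rpow_le_add (mul_pos hqp ha).le (mul_pos hqpθ hb).le hx p (p * θ)
  rw [show (q - p) * a * ((q - p * θ) * b) = a * b * (q - p) * (q - p * θ) by ring,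
    show (p + p * θ) / 2 = (p * θ + p + 2 * α - 2) / 2 + (1 - α) by ring] at hamgm
  rw [← inv_div (p * θ + p + 2 * α - 2)]
  exact le_rpow_inv_of_mul_rpow_add_le (by positivity) hx he (hamgm.trans h)

/-- Gap structure, upper bound: if (q−p)·a·x^p + (q−pθ)·b·x^(pθ) ≤ (q+α−1)·K·x^(1−α)
then x ≤ ((q+α−1)K / (2√(ab(q−p)(q−pθ))))^(2/(pθ+p+2α−2)). -/
theorem stmt_10 (p q θ α a b K x : ℝ)
    (hα0 : 0 < α) (hα1 : α < 1) (hp : 1 < p) (hθ : 1 < θ) (hpq : p * θ < q)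
    (ha : 0 < a) (hb : 0 < b) (hK : 0 < K) (hx : 0 < x)
    (h : (q - p) * a * x ^ p + (q - p * θ) * b * x ^ (p * θ) ≤
      (q + α - 1) * K * x ^ (1 - α)) :
    x ≤ ((q + α - 1) * K / (2 * Real.sqrt (a * b * (q - p) * (q - p * θ))))
        ^ (2 / (p * θ + p + 2 * α - 2)) :=
  stmt_10_general p q θ α a b K x hα0 hp hθ hpq ha hb hx h
end

section
/- Let p, q, θ, α be real numbers with 0 < α < 1 < p, θ > 1 and p·θ < q, and let a, b, K_c, K_F, λ, x > 0 be real numbers. If (q−p)·a·x^p + (q−p·θ)·b·x^(p·θ) ≤ (q+α−1)·K_c·x^(1−α) and (p+α−1)·a·x^p + (p·θ+α−1)·b·x^(p·θ) ≤ λ·q·(q+α−1)·K_F·x^q, then λ ≥ (2·√(a·b·(p+α−1)·(p·θ+α−1)) / (q·(q+α−1)·K_F)) · ( (q+α−1)·K_c / (2·√(a·b·(q−p)·(q−p·θ))) )^(−(2q−p−p·θ)/(p·θ+p+2α−2)). -/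
/-!
By AM–GM, each hypothesis bounds a single power `x ^ s`, `s = (p + p θ) / 2`, the mean of the two
exponents. The first then reads `x ^ (s - (1 - α)) ≤ C` with `s > 1 - α`, an upper bound on `x`;
the second reads `λ ≥ c · x ^ (s - q)` with `s < q`, a lower bound on `λ` that decreases in `x`.
Inserting the upper bound on `x` into the lower bound on `λ` gives
`λ ≥ c · C ^ ((s - q) / (s - (1 - α)))`.
-/

namespace Real

lemma two_mul_sqrt_mul_le_add {u v : ℝ} (hu : 0 ≤ u) (hv : 0 ≤ v) : 2 * √(u * v) ≤ u + v := by
  have : √(u * v) ≤ (u + v) / 2 :=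
    sqrt_le_iff.mpr ⟨by positivity, by nlinarith [sq_nonneg (u - v)]⟩
  linarith

lemma two_mul_sqrt_mul_rpow_le_add {x c₁ c₂ : ℝ} (p₁ p₂ : ℝ) (hx : 0 < x) (hc₁ : 0 ≤ c₁)
    (hc₂ : 0 ≤ c₂) :
    2 * √(c₁ * c₂) * x ^ ((p₁ + p₂) / 2) ≤ c₁ * x ^ p₁ + c₂ * x ^ p₂ := by
  have hmean : x ^ ((p₁ + p₂) / 2) = √(x ^ p₁ * x ^ p₂) := by
    rw [← rpow_add hx, sqrt_eq_rpow, ← rpow_mul hx.le, div_eq_mul_one_div]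
  calc 2 * √(c₁ * c₂) * x ^ ((p₁ + p₂) / 2)
      = 2 * √((c₁ * x ^ p₁) * (c₂ * x ^ p₂)) := by
        rw [hmean, mul_assoc, ← sqrt_mul (by positivity)]
        ring_nf
    _ ≤ c₁ * x ^ p₁ + c₂ * x ^ p₂ := two_mul_sqrt_mul_le_add (by positivity) (by positivity)

lemma mul_rpow_sub_le_of_mul_rpow_le_mul_rpow {x A B s t : ℝ} (hx : 0 < x)
    (h : A * x ^ s ≤ B * x ^ t) : A * x ^ (s - t) ≤ B := by
  have hsplit : x ^ s = x ^ (s - t) * x ^ t := by rw [← rpow_add hx, sub_add_cancel]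
  rw [hsplit, ← mul_assoc] at h
  exact le_of_mul_le_mul_right h (rpow_pos_of_pos hx t)

lemma rpow_div_le_rpow_of_rpow_le {x C e₁ e₂ : ℝ} (hx : 0 < x) (he₁ : 0 < e₁) (he₂ : e₂ ≤ 0)
    (h : x ^ e₁ ≤ C) : C ^ (e₂ / e₁) ≤ x ^ e₂ := by
  calc C ^ (e₂ / e₁)
      ≤ (x ^ e₁) ^ (e₂ / e₁) :=
        rpow_le_rpow_of_nonpos (rpow_pos_of_pos hx e₁) h (div_nonpos_of_nonpos_of_nonneg he₂ he₁.le)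
    _ = x ^ e₂ := by rw [← rpow_mul hx.le, mul_div_cancel₀ _ he₁.ne']

end Real

open Real

theorem stmt_12_general (p q θ α a b Kc KF lam x : ℝ)
    (hα0 : 0 < α) (hp : 1 < p) (hθ : 1 < θ) (hpq : p * θ < q)
    (ha : 0 < a) (hb : 0 < b) (hKF : 0 < KF)
    (hx : 0 < x)
    (h1 : (q - p) * a * x ^ p + (q - p * θ) * b * x ^ (p * θ) ≤
      (q + α - 1) * Kc * x ^ (1 - α))
    (h2 : (p + α - 1) * a * x ^ p + (p * θ + α - 1) * b * x ^ (p * θ) ≤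
      lam * q * (q + α - 1) * KF * x ^ q) :
    (2 * Real.sqrt (a * b * (p + α - 1) * (p * θ + α - 1)) / (q * (q + α - 1) * KF)) *
      ((q + α - 1) * Kc / (2 * Real.sqrt (a * b * (q - p) * (q - p * θ))))
        ^ (-((2 * q - p - p * θ) / (p * θ + p + 2 * α - 2))) ≤ lam := by
  have hpθ : p < p * θ := by nlinarith
  have hqp : 0 < q - p := by linarith
  have hqpθ : 0 < q - p * θ := by linarith
  have hpα : 0 < p + α - 1 := by linarith
  have hpθα : 0 < p * θ + α - 1 := by linarith
  have hqα : 0 < q + α - 1 := by linarith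
  have hq : 0 < q := by linarith
  set s := (p + p * θ) / 2 with hs
  set C := (q + α - 1) * Kc / (2 * √(a * b * (q - p) * (q - p * θ)))
  have hupper : x ^ (s - (1 - α)) ≤ C := by
    have h := (two_mul_sqrt_mul_rpow_le_add p (p * θ) hx (by positivity : 0 ≤ (q - p) * a)
      (by positivity : 0 ≤ (q - p * θ) * b)).trans h1
    rw [show (q - p) * a * ((q - p * θ) * b) = a * b * (q - p) * (q - p * θ) by ring] at h
    rw [le_div_iff₀ (by positivity), mul_comm]
    exact mul_rpow_sub_le_of_mul_rpow_le_mul_rpow hx h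
  have hlower : 2 * √(a * b * (p + α - 1) * (p * θ + α - 1)) / (q * (q + α - 1) * KF) *
      x ^ (s - q) ≤ lam := by
    have h := (two_mul_sqrt_mul_rpow_le_add p (p * θ) hx (by positivity : 0 ≤ (p + α - 1) * a)
      (by positivity : 0 ≤ (p * θ + α - 1) * b)).trans h2
    rw [show (p + α - 1) * a * ((p * θ + α - 1) * b) = a * b * (p + α - 1) * (p * θ + α - 1)
      by ring, show lam * q * (q + α - 1) * KF = lam * (q * (q + α - 1) * KF) by ring] at h
    rw [div_mul_eq_mul_div, div_le_iff₀ (by positivity)]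
    exact mul_rpow_sub_le_of_mul_rpow_le_mul_rpow hx h
  have hexp : -((2 * q - p - p * θ) / (p * θ + p + 2 * α - 2)) = (s - q) / (s - (1 - α)) := by
    rw [hs, neg_div', div_eq_div_iff (by linarith) (by linarith)]
    ring
  rw [hexp]
  refine le_trans (mul_le_mul_of_nonneg_left ?_ (by positivity)) hlower
  refine rpow_div_le_rpow_of_rpow_le hx ?_ ?_ hupper <;> linarith

/-- Lemma 3.2: a nonzero element of the degenerate Nehari set N_λ⁰ forces λ ≥ λ_{**}. -/
theorem stmt_12 (p q θ α a b Kc KF lam x : ℝ)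
    (hα0 : 0 < α) (hα1 : α < 1) (hp : 1 < p) (hθ : 1 < θ) (hpq : p * θ < q)
    (ha : 0 < a) (hb : 0 < b) (hKc : 0 < Kc) (hKF : 0 < KF)
    (hlam : 0 < lam) (hx : 0 < x)
    (h1 : (q - p) * a * x ^ p + (q - p * θ) * b * x ^ (p * θ) ≤
      (q + α - 1) * Kc * x ^ (1 - α))
    (h2 : (p + α - 1) * a * x ^ p + (p * θ + α - 1) * b * x ^ (p * θ) ≤
      lam * q * (q + α - 1) * KF * x ^ q) :
    (2 * Real.sqrt (a * b * (p + α - 1) * (p * θ + α - 1)) / (q * (q + α - 1) * KF)) *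
      ((q + α - 1) * Kc / (2 * Real.sqrt (a * b * (q - p) * (q - p * θ))))
        ^ (-((2 * q - p - p * θ) / (p * θ + p + 2 * α - 2))) ≤ lam :=
  stmt_12_general p q θ α a b Kc KF lam x hα0 hp hθ hpq ha hb hKF hx h1 h2
end
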